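/- arXiv:2404.06703 — 2 statements merged into one kernel-verified Lean document; each statement's English description precedes it below -/
import Mathlib

section
/- Let g ≥ 1 and let W be a nonempty closed subset of the probability simplex Δ_g. If for every S ∈ ℝ^g the infimum of w · S over w ∈ W equals min_{i ∈ {1,…,g}} S_i, then every standard basis vector e_i (i = 1,…,g) belongs to W. (Converse of the egalitarian characterization: an Angel whose worst-case payoff is egalitarian welfare must be able to target each individual.) -/
/-!
Test the hypothesis against `S = -eᵢ`: then `min S = -1` and `w · S = -wᵢ`. Since `W` is compact
the infimum is attained, so some `w ∈ W` has `wᵢ = 1`, and in the simplex this forces `w = eᵢ`.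
-/

open Finset

theorem eq_single_of_mem_stdSimplex_of_apply_eq_one {𝕜 ι : Type*} [Semiring 𝕜] [PartialOrder 𝕜]
    [IsOrderedCancelAddMonoid 𝕜] [Fintype ι] [DecidableEq ι] {w : ι → 𝕜}
    (hw : w ∈ stdSimplex 𝕜 ι) {i : ι} (hwi : w i = 1) : w = Pi.single i 1 := by
  have hrest : ∑ j ∈ univ.erase i, w j = 0 := by
    have hsum := hw.2
    rwa [← add_sum_erase _ _ (mem_univ i), hwi, add_eq_left] at hsum
  ext j
  rcases eq_or_ne j i with rfl | hji
  · simp [hwi]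
  · rw [Pi.single_eq_of_ne hji]
    exact (sum_eq_zero_iff_of_nonneg fun k _ => hw.1 k).1 hrest j (mem_erase.2 ⟨hji, mem_univ j⟩)

theorem inf'_neg_single {𝕜 ι : Type*} [Ring 𝕜] [LinearOrder 𝕜] [IsOrderedRing 𝕜] [Fintype ι]
    [DecidableEq ι] (i : ι) (hne : (univ : Finset ι).Nonempty) :
    univ.inf' hne (-Pi.single i 1 : ι → 𝕜) = -1 := by
  refine le_antisymm ((inf'_le _ (mem_univ i)).trans_eq (by simp)) (le_inf' _ _ fun j _ => ?_)
  rcases eq_or_ne j i with rfl | hji <;> simp [*]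

theorem sum_mul_neg_single {𝕜 ι : Type*} [Ring 𝕜] [Fintype ι] [DecidableEq ι] (w : ι → 𝕜)
    (i : ι) : ∑ j, w j * (-Pi.single i 1 : ι → 𝕜) j = -w i := by
  simp [Pi.single_apply]

/-- Converse of the egalitarian characterization: if a nonempty closed Angel
action space `W ⊆ Δ_g` satisfies `inf_{w ∈ W} w · S = min_i S_i` for every
`S`, then every standard basis vector belongs to `W`. -/
theorem egalitarian_converse (g : ℕ) (hg : 0 < g) (W : Set (Fin g → ℝ))
    (hWne : W.Nonempty) (hWclosed : IsClosed W)
    (hWsub : W ⊆ stdSimplex ℝ (Fin g))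
    (h : ∀ S : Fin g → ℝ,
      sInf ((fun w => ∑ i, w i * S i) '' W)
        = Finset.univ.inf' ⟨⟨0, hg⟩, Finset.mem_univ _⟩ S) :
    ∀ i : Fin g, Pi.single i (1 : ℝ) ∈ W := by
  intro i
  set f := fun w : Fin g → ℝ => ∑ j, w j * (-Pi.single i 1 : Fin g → ℝ) j
  have hWcompact : IsCompact W :=
    (isCompact_stdSimplex ℝ (Fin g)).of_isClosed_subset hWclosed hWsub
  obtain ⟨w, hwW, hw⟩ : sInf (f '' W) ∈ f '' W :=
    (hWcompact.image (by fun_prop)).sInf_mem (hWne.image f)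
  have hwi : -w i = -1 := by
    rw [← sum_mul_neg_single, ← inf'_neg_single i ⟨i, mem_univ i⟩]
    exact hw.trans (h _)
  rwa [← eq_single_of_mem_stdSimplex_of_apply_eq_one (hWsub hwW) (neg_inj.1 hwi)]
end

section
/- Let g ≥ 1, let p < 0, let w_min > 0, and let w ∈ Δ_g with w_i ≥ w_min for all i. Then for all S, S′ ∈ ℝ^g with all coordinates strictly positive, |M_p(S; w) − M_p(S′; w)| ≤ w_min^{−1/|p|} · ‖S − S′‖_∞. (Lipschitz continuity of negative-power weighted power means: when all weights are bounded below by w_min > 0, M_p(·; w) is (1/w_min^{1/|p|})-Lipschitz with respect to the supremum norm.) -/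
/-!
For `p < 0` the power mean `M = M_p(·; w)` is monotone and positively homogeneous, and each
coordinate dominates it: `w i * S i ^ p ≤ M ^ p` gives `M ≤ w i ^ (1 / p) * S i ≤ c * S i` with
`c = wmin ^ (1 / p)`. Hence `S i + t ≤ (1 + c * t / M) * S i` for `t ≥ 0`, and monotonicity with
homogeneity yield `M (S + t) ≤ M S + c * t`. Since `S ≤ S' + ‖S - S'‖_∞` coordinatewise, this is
the Lipschitz bound; note `wmin ^ (-(1 / |p|)) = c`.
-/

open Finset Real

noncomputable def powerMean {ι : Type*} [Fintype ι] (w : ι → ℝ) (p : ℝ) (S : ι → ℝ) : ℝ :=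
  (∑ i, w i * S i ^ p) ^ (1 / p)

namespace powerMean

variable {ι : Type*} [Fintype ι] {w : ι → ℝ} {p : ℝ} {S T : ι → ℝ}

lemma sum_mul_rpow_pos [Nonempty ι] (hw : ∀ i, 0 < w i) (hS : ∀ i, 0 < S i) :
    0 < ∑ i, w i * S i ^ p :=
  Finset.sum_pos (fun i _ => mul_pos (hw i) (rpow_pos_of_pos (hS i) p)) univ_nonempty

lemma pos [Nonempty ι] (hw : ∀ i, 0 < w i) (hS : ∀ i, 0 < S i) : 0 < powerMean w p S :=
  rpow_pos_of_pos (sum_mul_rpow_pos hw hS) _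

lemma const_mul (hw : ∀ i, 0 ≤ w i) (hp : p ≠ 0) {c : ℝ} (hc : 0 ≤ c) (hS : ∀ i, 0 ≤ S i) :
    powerMean w p (fun i => c * S i) = c * powerMean w p S := by
  unfold powerMean
  simp_rw [mul_rpow hc (hS _), mul_left_comm (w _), ← mul_sum]
  rw [mul_rpow (rpow_nonneg hc p)
      (sum_nonneg fun i _ => mul_nonneg (hw i) (rpow_nonneg (hS i) p)),
    one_div, rpow_rpow_inv hc hp]

lemma mono_of_neg [Nonempty ι] (hp : p < 0) (hw : ∀ i, 0 < w i) (hS : ∀ i, 0 < S i)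
    (hST : ∀ i, S i ≤ T i) : powerMean w p S ≤ powerMean w p T := by
  have hT : ∀ i, 0 < T i := fun i => (hS i).trans_le (hST i)
  refine rpow_le_rpow_of_nonpos (sum_mul_rpow_pos hw hT) ?_ (one_div_neg.2 hp).le
  exact sum_le_sum fun i _ =>
    mul_le_mul_of_nonneg_left (rpow_le_rpow_of_nonpos (hS i) (hST i) hp.le) (hw i).le

lemma le_rpow_weight_mul (hp : p < 0) (hw : ∀ i, 0 < w i) (hS : ∀ i, 0 < S i) (i : ι) :
    powerMean w p S ≤ w i ^ (1 / p) * S i := by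
  have hterm : 0 < w i * S i ^ p := mul_pos (hw i) (rpow_pos_of_pos (hS i) p)
  have hle : w i * S i ^ p ≤ ∑ j, w j * S j ^ p :=
    single_le_sum (f := fun j => w j * S j ^ p)
      (fun j _ => (mul_pos (hw j) (rpow_pos_of_pos (hS j) p)).le) (mem_univ i)
  calc powerMean w p S ≤ (w i * S i ^ p) ^ (1 / p) :=
        rpow_le_rpow_of_nonpos hterm hle (one_div_neg.2 hp).le
    _ = w i ^ (1 / p) * S i := by
        rw [mul_rpow (hw i).le (rpow_nonneg (hS i).le p), one_div, rpow_rpow_inv (hS i).le hp.ne]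

lemma add_const_le [Nonempty ι] (hp : p < 0) (hw : ∀ i, 0 < w i) (hS : ∀ i, 0 < S i) {c : ℝ}
    (hc : ∀ i, powerMean w p S ≤ c * S i) {t : ℝ} (ht : 0 ≤ t) :
    powerMean w p (fun i => S i + t) ≤ powerMean w p S + c * t := by
  set m := powerMean w p S
  have hm : 0 < m := pos hw hS
  have hscale : ∀ i, S i + t ≤ (1 + c * t / m) * S i := by
    intro i
    have : t ≤ c * t * S i / m := by
      rw [le_div_iff₀ hm]
      nlinarith [hc i]
    rw [add_mul, one_mul, div_mul_eq_mul_div]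
    linarith
  calc powerMean w p (fun i => S i + t) ≤ powerMean w p (fun i => (1 + c * t / m) * S i) :=
        mono_of_neg hp hw (fun i => by linarith [hS i]) hscale
    _ = (1 + c * t / m) * m := by
        refine const_mul (fun i => (hw i).le) hp.ne ?_ (fun i => (hS i).le)
        have i₀ := Classical.arbitrary ι
        have hc0 : 0 < c := pos_of_mul_pos_left (hm.trans_le (hc i₀)) (hS i₀).le
        positivity
    _ = m + c * t := by field_simp

lemma abs_sub_le_of_forall_abs_sub_le [Nonempty ι] (hp : p < 0) {wmin : ℝ} (hwmin : 0 < wmin)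
    (hge : ∀ i, wmin ≤ w i) {S' : ι → ℝ} (hS : ∀ i, 0 < S i) (hS' : ∀ i, 0 < S' i) {t : ℝ}
    (ht : ∀ i, |S i - S' i| ≤ t) :
    |powerMean w p S - powerMean w p S'| ≤ wmin ^ (1 / p) * t := by
  have hw : ∀ i, 0 < w i := fun i => hwmin.trans_le (hge i)
  have ht0 : 0 ≤ t := (abs_nonneg _).trans (ht (Classical.arbitrary ι))
  have hshift : ∀ {A B : ι → ℝ}, (∀ i, 0 < A i) → (∀ i, 0 < B i) → (∀ i, A i ≤ B i + t) →
      powerMean w p A ≤ powerMean w p B + wmin ^ (1 / p) * t := by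
    intro A B hA hB hAB
    refine (mono_of_neg hp hw hA hAB).trans (add_const_le hp hw hB (fun i => ?_) ht0)
    exact (le_rpow_weight_mul hp hw hB i).trans <| mul_le_mul_of_nonneg_right
      (rpow_le_rpow_of_nonpos hwmin (hge i) (one_div_neg.2 hp).le) (hB i).le
  rw [abs_sub_le_iff]
  constructor
  · linarith [hshift hS hS' fun i => by linarith [(abs_le.1 (ht i)).2]]
  · linarith [hshift hS' hS fun i => by linarith [(abs_le.1 (ht i)).1]]

end powerMean

theorem power_mean_lipschitz_neg_p_general (g : ℕ) (hg : 0 < g) (p : ℝ) (hp : p < 0)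
    (wmin : ℝ) (hwmin : 0 < wmin) (w : Fin g → ℝ)
    (hge : ∀ i, wmin ≤ w i)
    (S S' : Fin g → ℝ) (hS : ∀ i, 0 < S i) (hS' : ∀ i, 0 < S' i) :
    |(∑ i, w i * S i ^ p) ^ (1 / p) - (∑ i, w i * S' i ^ p) ^ (1 / p)|
      ≤ wmin ^ (-(1 / |p|))
        * Finset.univ.sup' ⟨⟨0, hg⟩, Finset.mem_univ _⟩
            (fun i => |S i - S' i|) := by
  have : Nonempty (Fin g) := ⟨⟨0, hg⟩⟩
  rw [abs_of_neg hp, div_neg, neg_neg]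
  exact powerMean.abs_sub_le_of_forall_abs_sub_le hp hwmin hge hS hS' fun i =>
    le_sup' (fun i => |S i - S' i|) (mem_univ i)

/-- Lipschitz continuity of negative-power weighted power means: for `p < 0`
and weights bounded below by `w_min > 0`, `M_p(·; w)` is
`w_min ^ (−1/|p|)`-Lipschitz with respect to the supremum norm on vectors
with strictly positive coordinates. -/
theorem power_mean_lipschitz_neg_p (g : ℕ) (hg : 0 < g) (p : ℝ) (hp : p < 0)
    (wmin : ℝ) (hwmin : 0 < wmin) (w : Fin g → ℝ)
    (hw : w ∈ stdSimplex ℝ (Fin g)) (hge : ∀ i, wmin ≤ w i)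
    (S S' : Fin g → ℝ) (hS : ∀ i, 0 < S i) (hS' : ∀ i, 0 < S' i) :
    |(∑ i, w i * S i ^ p) ^ (1 / p) - (∑ i, w i * S' i ^ p) ^ (1 / p)|
      ≤ wmin ^ (-(1 / |p|))
        * Finset.univ.sup' ⟨⟨0, hg⟩, Finset.mem_univ _⟩
            (fun i => |S i - S' i|) :=
  power_mean_lipschitz_neg_p_general g hg p hp wmin hwmin w hge S S' hS hS'
end
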